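/- For a strategy σ and a set of positions φ on a justified AJM game A: φ is a skeleton of σ if and only if φ is a skeleton (in the abstract sense) and φ• = σ. -/

import Mathlib

/- Justified AJM games, after Abramsky's game semantics for access control. -/

namespace AJM

inductive Pol where
  | P
  | O
deriving DecidableEq

inductive QA where
  | Q
  | Ans
deriving DecidableEq

def Pol.flip : Pol → Pol
  | .P => .O
  | .O => .P

/-- Well-bracketed strings over moves (condition (p4)). -/
inductive WB {M : Type} (lab : M → Pol × QA) (just : M → Option M) : List M → Prop
  | nil : WB lab just []
  | wrap (a q : M) (u : List M) : (lab a).2 = QA.Ans → just a = some q →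
      WB lab just u → WB lab just (q :: (u ++ [a]))
  | append (u v : List M) : WB lab just u → WB lab just v → WB lab just (u ++ v)

/-- Conditions (p1)–(p5): Opponent starts, alternation, linearity,
well-bracketing, justifiers occur before their moves. -/
def ValidSeq {M : Type} (lab : M → Pol × QA) (just : M → Option M) (s : List M) : Prop :=
  (∀ m, s.head? = some m → (lab m).1 = Pol.O) ∧
  List.Chain' (fun m m' => (lab m).1 ≠ (lab m').1) s ∧
  s.Nodup ∧
  (∃ t, s <+: t ∧ WB lab just t) ∧
  (∀ s₁ m s₂, s = s₁ ++ m :: s₂ → ∀ m', just m = some m' → m' ∈ s₁)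

/-- A justified AJM game (the data). -/
structure Game where
  M : Type
  lab : M → Pol × QA
  just : M → Option M
  pos : Set (List M)
  equiv : List M → List M → Prop

namespace Game

/-- The axioms making the data of a `Game` an actual justified AJM game. -/
structure Valid (A : Game) : Prop where
  just_wf : WellFounded fun m m' : A.M => A.just m' = some m
  just_pol : ∀ m m', A.just m = some m' → (A.lab m).1 ≠ (A.lab m').1
  just_qa : ∀ m m', A.just m = some m' → (A.lab m).2 = QA.Ans → (A.lab m').2 = QA.Q
  ans_justified : ∀ m, (A.lab m).2 = QA.Ans → A.just m ≠ none
  pos_nonempty : A.pos.Nonempty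
  pos_prefix_closed : ∀ s t : List A.M, s <+: t → t ∈ A.pos → s ∈ A.pos
  pos_valid : ∀ s ∈ A.pos, ValidSeq A.lab A.just s
  equiv_mem : ∀ s t, A.equiv s t → s ∈ A.pos ∧ t ∈ A.pos
  equiv_refl : ∀ s ∈ A.pos, A.equiv s s
  equiv_symm : ∀ s t, A.equiv s t → A.equiv t s
  equiv_trans : ∀ s t u, A.equiv s t → A.equiv t u → A.equiv s u
  equiv_lab : ∀ s t, A.equiv s t → s.map A.lab = t.map A.lab
  equiv_prefix : ∀ s t s' t', A.equiv s t → s' <+: s → t' <+: t →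
      s'.length = t'.length → A.equiv s' t'
  equiv_ext : ∀ s t a, A.equiv s t → s ++ [a] ∈ A.pos → ∃ b, A.equiv (s ++ [a]) (t ++ [b])

/-- A strategy on a game: a non-empty set of even-length positions that is
causally consistent, representation independent and deterministic. -/
structure IsStrategy (A : Game) (σ : Set (List A.M)) : Prop where
  subset_pos : σ ⊆ A.pos
  even_length : ∀ s ∈ σ, Even s.length
  nonempty : σ.Nonempty
  causal : ∀ s a b, s ++ [a, b] ∈ σ → s ∈ σ
  repind : ∀ s t, s ∈ σ → A.equiv s t → t ∈ σ
  det : ∀ s t a b a' b', s ++ [a, b] ∈ σ → t ++ [a', b'] ∈ σ →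
      A.equiv (s ++ [a]) (t ++ [a']) → A.equiv (s ++ [a, b]) (t ++ [a', b'])

/-- A skeleton of a strategy `σ`: a non-empty, causally consistent subset of
`σ` satisfying Uniformization. -/
structure IsSkeletonOf (A : Game) (φ σ : Set (List A.M)) : Prop where
  nonempty : φ.Nonempty
  subset : φ ⊆ σ
  causal : ∀ s a b, s ++ [a, b] ∈ φ → s ∈ φ
  uniformization : ∀ s a b, s ++ [a, b] ∈ σ → s ∈ φ → ∃! b', s ++ [a, b'] ∈ φ

/-- A skeleton in the abstract sense (independently of any strategy):
a non-empty, causally consistent set of even-length positions satisfying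
Functional Determinacy and Functional Representation Independence. -/
structure IsSkeleton (A : Game) (φ : Set (List A.M)) : Prop where
  subset_pos : φ ⊆ A.pos
  even_length : ∀ s ∈ φ, Even s.length
  nonempty : φ.Nonempty
  causal : ∀ s a b, s ++ [a, b] ∈ φ → s ∈ φ
  funDet : ∀ s a b c, s ++ [a, b] ∈ φ → s ++ [a, c] ∈ φ → b = c
  funRepInd : ∀ s t a b a', s ++ [a, b] ∈ φ → t ∈ φ →
      A.equiv (s ++ [a]) (t ++ [a']) →
      ∃! b', t ++ [a', b'] ∈ φ ∧ A.equiv (s ++ [a, b]) (t ++ [a', b'])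

/-- `φ• = { t | ∃ s ∈ φ, s ≈_A t }`, the saturation of `φ` under `≈_A`. -/
def dot (A : Game) (φ : Set (List A.M)) : Set (List A.M) :=
  {t | ∃ s ∈ φ, A.equiv s t}

/-- The preorder `φ ⊑ ψ` on skeletons. -/
def Subeq (A : Game) (φ ψ : Set (List A.M)) : Prop :=
  ∀ s a b s' a', s ++ [a, b] ∈ φ → s' ∈ ψ → A.equiv (s ++ [a]) (s' ++ [a']) →
    ∃ b', s' ++ [a', b'] ∈ ψ ∧ A.equiv (s ++ [a, b]) (s' ++ [a', b'])

end Game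

end AJM


theorem List.exists_eq_append_pair_of_even {α : Type*} {l : List α} (h : Even l.length)
    (hne : l ≠ []) : ∃ s a b, l = s ++ [a, b] := by
  rcases l.eq_nil_or_concat with rfl | ⟨l', b, rfl⟩
  · exact absurd rfl hne
  rcases l'.eq_nil_or_concat with rfl | ⟨s, a, rfl⟩
  · simp at h
  · exact ⟨s, a, b, by simp⟩

namespace AJM

theorem nil_mem_of_causal {α : Type*} {φ : Set (List α)} (hne : φ.Nonempty)
    (heven : ∀ s ∈ φ, Even s.length) (hcausal : ∀ s a b, s ++ [a, b] ∈ φ → s ∈ φ) :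
    [] ∈ φ := by
  obtain ⟨s, hs⟩ := hne
  induction hn : s.length using Nat.strong_induction_on generalizing s with
  | _ n ih =>
    subst hn
    by_cases h : s = []
    · exact h ▸ hs
    · obtain ⟨t, a, b, rfl⟩ := List.exists_eq_append_pair_of_even (heven s hs) h
      exact ih t.length (by simp) t (hcausal _ _ _ hs) rfl

namespace Game

variable {A : Game} {σ φ : Set (List A.M)}

theorem Valid.length_eq (hA : A.Valid) {s t : List A.M} (h : A.equiv s t) :
    s.length = t.length := by
  simpa using congrArg List.length (hA.equiv_lab s t h)

theorem Valid.exists_equiv_append_pair (hA : A.Valid) {s t : List A.M} {a a' b : A.M}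
    (h : A.equiv (s ++ [a]) (t ++ [a'])) (hb : s ++ [a, b] ∈ A.pos) :
    ∃ b', A.equiv (s ++ [a, b]) (t ++ [a', b']) := by
  obtain ⟨b', hb'⟩ := hA.equiv_ext (s ++ [a]) (t ++ [a']) b h (by simpa using hb)
  exact ⟨b', by simpa using hb'⟩

theorem Valid.exists_eq_append_pair_of_equiv (hA : A.Valid) {u s : List A.M} {a b : A.M}
    (h : A.equiv u (s ++ [a, b])) :
    ∃ u' c d, u = u' ++ [c, d] ∧ A.equiv (u' ++ [c]) (s ++ [a]) := by
  have hlen := hA.length_eq h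
  rcases u.eq_nil_or_concat with rfl | ⟨u₁, d, rfl⟩
  · simp at hlen
  rcases u₁.eq_nil_or_concat with rfl | ⟨u', c, rfl⟩
  · simp at hlen
  refine ⟨u', c, d, by simp, hA.equiv_prefix _ _ _ _ h ⟨[d], by simp⟩ ⟨[b], by simp⟩ ?_⟩
  simpa using hlen

theorem IsSkeletonOf.funDet (hφ : IsSkeletonOf A φ σ) {s : List A.M} {a b c : A.M}
    (hb : s ++ [a, b] ∈ φ) (hc : s ++ [a, c] ∈ φ) : b = c := by
  obtain ⟨b', -, hunique⟩ := hφ.uniformization s a b (hφ.subset hb) (hφ.causal _ _ _ hb)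
  exact (hunique b hb).trans (hunique c hc).symm

/-- Representation independence carries the move `b` over to `σ`, uniformization then answers
inside `φ`, and determinacy makes the answer equivalent. -/
theorem IsSkeletonOf.exists_equiv_response (hA : A.Valid) (hσ : IsStrategy A σ)
    (hφ : IsSkeletonOf A φ σ) {s t : List A.M} {a b a' : A.M} (hsab : s ++ [a, b] ∈ σ)
    (ht : t ∈ φ) (h : A.equiv (s ++ [a]) (t ++ [a'])) :
    ∃ b', t ++ [a', b'] ∈ φ ∧ A.equiv (s ++ [a, b]) (t ++ [a', b']) := by
  obtain ⟨c, hc⟩ := hA.exists_equiv_append_pair h (hσ.subset_pos hsab)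
  obtain ⟨b', hb', -⟩ := hφ.uniformization t a' c (hσ.repind _ _ hsab hc) ht
  exact ⟨b', hb', hσ.det s t a b a' b' hsab (hφ.subset hb') h⟩

theorem IsSkeletonOf.isSkeleton (hA : A.Valid) (hσ : IsStrategy A σ)
    (hφ : IsSkeletonOf A φ σ) : IsSkeleton A φ where
  subset_pos := hφ.subset.trans hσ.subset_pos
  even_length s hs := hσ.even_length s (hφ.subset hs)
  nonempty := hφ.nonempty
  causal := hφ.causal
  funDet _ _ _ _ := hφ.funDet
  funRepInd s t a b a' hsab ht h := by
    obtain ⟨b', hb', hequiv⟩ := hφ.exists_equiv_response hA hσ (hφ.subset hsab) ht h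
    exact ⟨b', ⟨hb', hequiv⟩, fun c hc => hφ.funDet hc.1 hb'⟩

theorem IsSkeletonOf.dot_eq (hA : A.Valid) (hσ : IsStrategy A σ) (hφ : IsSkeletonOf A φ σ) :
    dot A φ = σ := by
  refine Set.Subset.antisymm (fun t ⟨s, hs, h⟩ => hσ.repind s t (hφ.subset hs) h) ?_
  intro t ht
  induction hn : t.length using Nat.strong_induction_on generalizing t with
  | _ n ih =>
    subst hn
    by_cases h : t = []
    · subst h
      have hnil := nil_mem_of_causal hφ.nonempty (hφ.isSkeleton hA hσ).even_length hφ.causal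
      exact ⟨[], hnil, hA.equiv_refl [] (hσ.subset_pos ht)⟩
    obtain ⟨s, a, b, rfl⟩ := List.exists_eq_append_pair_of_even (hσ.even_length _ ht) h
    obtain ⟨s', hs', hequiv⟩ := ih s.length (by simp) (hσ.causal s a b ht) rfl
    obtain ⟨a', ha'⟩ := hA.equiv_ext s s' a (hA.equiv_symm _ _ hequiv)
      (hA.pos_prefix_closed _ _ ⟨[b], by simp⟩ (hσ.subset_pos ht))
    obtain ⟨b', hb', hequiv'⟩ := hφ.exists_equiv_response hA hσ ht hs' ha'
    exact ⟨s' ++ [a', b'], hb', hA.equiv_symm _ _ hequiv'⟩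

theorem IsSkeleton.isSkeletonOf_dot (hA : A.Valid) (hφ : IsSkeleton A φ) :
    IsSkeletonOf A φ (dot A φ) where
  nonempty := hφ.nonempty
  subset s hs := ⟨s, hs, hA.equiv_refl s (hφ.subset_pos hs)⟩
  causal := hφ.causal
  uniformization s a b := by
    rintro ⟨u, hu, h⟩ hs
    obtain ⟨u', c, d, rfl, hprefix⟩ := hA.exists_eq_append_pair_of_equiv h
    obtain ⟨b', ⟨hb', -⟩, -⟩ := hφ.funRepInd u' s c d a hu hs hprefix
    exact ⟨b', hb', fun y hy => hφ.funDet s a y b' hy hb'⟩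

end Game

end AJM

open AJM Game in
/-- `φ` is a skeleton of `σ` iff `φ` is a skeleton (in the abstract sense)
and `φ• = σ`. -/
theorem skeletonOf_iff (A : Game) (hA : A.Valid)
    (σ φ : Set (List A.M)) (hσ : IsStrategy A σ) :
    IsSkeletonOf A φ σ ↔ (IsSkeleton A φ ∧ dot A φ = σ) := by
  refine ⟨fun hφ => ⟨hφ.isSkeleton hA hσ, hφ.dot_eq hA hσ⟩, ?_⟩
  rintro ⟨hφ, rfl⟩
  exact hφ.isSkeletonOf_dot hA
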